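/- arXiv:quant-ph/0401162 — 2 statements merged into one kernel-verified Lean document; each statement's English description precedes it below -/
import Mathlib

section
/- A nonzero vector φ : Fin 2 × Fin 2 → ℂ is separable — i.e. there exist x, y : Fin 2 → ℂ with φ (i, j) = x i * y j for all i, j — if and only if ε(φ) = 0. -/
open Matrix Kronecker

noncomputable section

def σy : Matrix (Fin 2) (Fin 2) ℂ := !![0, -Complex.I; Complex.I, 0]

def eps (φ : Fin 2 × Fin 2 → ℂ) : ℂ := φ ⬝ᵥ ((σy ⊗ₖ σy).mulVec φ)

def CNOT : Matrix (Fin 2 × Fin 2) (Fin 2 × Fin 2) ℂ :=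
  Matrix.of fun p q => if p.1 = q.1 ∧ p.2 = q.1 + q.2 then 1 else 0

def e (i j : Fin 2) : Fin 2 × Fin 2 → ℂ := Pi.single (i, j) 1

def e₀ : Fin 2 × Fin 2 → ℂ := e 0 0

def Rz (θ : ℝ) : Matrix (Fin 2) (Fin 2) ℂ :=
  !![Complex.exp (Complex.I * θ / 2), 0; 0, Complex.exp (-Complex.I * θ / 2)]

def Rx (θ : ℝ) : Matrix (Fin 2) (Fin 2) ℂ :=
  !![(Real.cos (θ / 2) : ℂ), Complex.I * Real.sin (θ / 2);
     Complex.I * Real.sin (θ / 2), (Real.cos (θ / 2) : ℂ)]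

lemma eps_eq' (φ : Fin 2 × Fin 2 → ℂ) :
    eps φ = -2 * (φ (0,0) * φ (1,1) - φ (0,1) * φ (1,0)) := by
  simp [eps, dotProduct, mulVec, Fintype.sum_prod_type, Fin.sum_univ_two,
    kroneckerMap_apply, σy]
  ring

theorem separable_iff_eps_eq_zero (φ : Fin 2 × Fin 2 → ℂ) (hφ : φ ≠ 0) :
    (∃ x y : Fin 2 → ℂ, ∀ i j, φ (i, j) = x i * y j) ↔ eps φ = 0 := by
  rw [eps_eq']
  constructor
  · rintro ⟨x, y, h⟩
    simp only [h]; ring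
  · intro h
    have hd : φ (0,0) * φ (1,1) = φ (0,1) * φ (1,0) := by linear_combination -h/2
    by_cases ha : φ (0,0) ≠ 0
    · refine ⟨![φ (0,0), φ (1,0)], ![1, φ (0,1) / φ (0,0)], ?_⟩
      simp only [Fin.forall_fin_two, Matrix.cons_val_zero, Matrix.cons_val_one,
        Matrix.head_cons, mul_one]
      refine ⟨⟨trivial, ?_⟩, trivial, ?_⟩
      · rw [mul_comm]; exact (div_mul_cancel₀ _ ha).symm
      · rw [mul_div_assoc', eq_div_iff ha]; linear_combination hd
    push_neg at ha
    by_cases hb : φ (0,1) ≠ 0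
    · have hc : φ (1,0) = 0 := by
        rw [ha, zero_mul] at hd
        rcases mul_eq_zero.mp hd.symm with h' | h'
        · exact absurd h' hb
        · exact h'
      refine ⟨![φ (0,1), φ (1,1)], ![0, 1], ?_⟩
      simp only [Fin.forall_fin_two, Matrix.cons_val_zero, Matrix.cons_val_one,
        Matrix.head_cons, mul_one, mul_zero]
      exact ⟨⟨ha, trivial⟩, hc, trivial⟩
    push_neg at hb
    refine ⟨![0, 1], ![φ (1,0), φ (1,1)], ?_⟩
    simp only [Fin.forall_fin_two, Matrix.cons_val_zero, Matrix.cons_val_one,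
      Matrix.head_cons, one_mul, zero_mul]
    exact ⟨⟨ha, hb⟩, trivial, trivial⟩
end
end

section
/- No single two-qubit gate suffices up to the computational-basis 1+1+1+1 measurement don't-care: for every G ∈ Matrix.unitaryGroup (Fin 2 × Fin 2) ℂ there exists u ∈ Matrix.unitaryGroup (Fin 2 × Fin 2) ℂ such that for all a, b, c, d ∈ Matrix.unitaryGroup (Fin 2) ℂ and every δ : Fin 2 × Fin 2 → ℂ with ‖δ p‖ = 1 for all p, u ≠ Matrix.diagonal δ * (c ⊗ d) * G * (a ⊗ b). -/
open Matrix Kronecker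

noncomputable section

/-! The form `eps φ = φᵀ (σy ⊗ σy) φ` equals `-2 det Φ`, where `Φ i j = φ (i, j)`. On the rows of
a matrix it is therefore multiplied by `det a * det b` under right multiplication by `a ⊗ b`, and
by the square of a phase under left multiplication by a diagonal unitary. If both `1` and a gate `u`
had the form `D (c ⊗ d) G (a ⊗ b)`, solving the first equation for `G` would give
`u = D₁ (c ⊗ d) Δ (a ⊗ b)` with `Δ` diagonal. The rows `(0, 0)` and `(1, 0)` of `(c ⊗ d) Δ` have
`eps` values of equal norm, because `‖c 0 0 * c 0 1‖ = ‖c 1 0 * c 1 1‖` for unitary `c`. A Givens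
rotation on `span {e 0 1, e 1 0}` breaks this: its row `(0, 0)` is the product state `e 0 0`,
while its row `(1, 0)` is entangled. -/

theorem eps_eq_neg_two_mul_det (φ : Fin 2 × Fin 2 → ℂ) :
    eps φ = -2 * (Matrix.of (Function.curry φ)).det := by
  simp [eps, σy, dotProduct, mulVec, Fintype.sum_prod_type, det_fin_two]
  ring

theorem of_curry_vecMul_kronecker {R m n : Type*} [CommSemiring R] [Fintype m] [Fintype n]
    (φ : m × n → R) (a : Matrix m m R) (b : Matrix n n R) :
    of (Function.curry (φ ᵥ* (a ⊗ₖ b))) = aᵀ * of (Function.curry φ) * b := by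
  ext i j
  simp only [of_apply, Function.curry_apply, vecMul, dotProduct, mul_apply, transpose_apply,
    kroneckerMap_apply, Fintype.sum_prod_type, Finset.sum_mul]
  rw [Finset.sum_comm]
  exact Finset.sum_congr rfl fun l _ => Finset.sum_congr rfl fun k _ => by ring

theorem eps_vecMul_kronecker (φ : Fin 2 × Fin 2 → ℂ) (a b : Matrix (Fin 2) (Fin 2) ℂ) :
    eps (φ ᵥ* (a ⊗ₖ b)) = a.det * b.det * eps φ := by
  rw [eps_eq_neg_two_mul_det, eps_eq_neg_two_mul_det, of_curry_vecMul_kronecker, det_mul,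
    det_mul, det_transpose]
  ring

theorem eps_smul (z : ℂ) (φ : Fin 2 × Fin 2 → ℂ) : eps (z • φ) = z ^ 2 * eps φ := by
  simp only [eps, mulVec_smul, dotProduct_smul, smul_dotProduct, smul_eq_mul]
  ring

theorem eps_kronecker_mul_diagonal_row (c d : Matrix (Fin 2) (Fin 2) ℂ) (δ : Fin 2 × Fin 2 → ℂ)
    (i j : Fin 2) :
    eps (((c ⊗ₖ d) * diagonal δ) (i, j)) =
      c i 0 * c i 1 * (2 * (d j 0 * d j 1) * (δ (0, 1) * δ (1, 0) - δ (0, 0) * δ (1, 1))) := by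
  simp [eps_eq_neg_two_mul_det, det_fin_two, mul_diagonal]
  ring

theorem sum_norm_sq_row_of_mem_unitaryGroup {n : Type*} [Fintype n] [DecidableEq n]
    {U : Matrix n n ℂ} (hU : U ∈ unitaryGroup n ℂ) (i : n) : ∑ j, ‖U i j‖ ^ 2 = 1 := by
  have h := congrFun₂ (mem_unitaryGroup_iff.mp hU) i i
  simp only [mul_apply, star_apply, RCLike.star_def, Complex.mul_conj', one_apply_eq] at h
  exact_mod_cast h

theorem sum_norm_sq_col_of_mem_unitaryGroup {n : Type*} [Fintype n] [DecidableEq n]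
    {U : Matrix n n ℂ} (hU : U ∈ unitaryGroup n ℂ) (j : n) : ∑ i, ‖U i j‖ ^ 2 = 1 := by
  simpa using sum_norm_sq_row_of_mem_unitaryGroup (Unitary.star_mem hU) j

theorem norm_mul_row_zero_eq_row_one {c : Matrix (Fin 2) (Fin 2) ℂ}
    (hc : c ∈ unitaryGroup (Fin 2) ℂ) : ‖c 0 0 * c 0 1‖ = ‖c 1 0 * c 1 1‖ := by
  have r0 := sum_norm_sq_row_of_mem_unitaryGroup hc 0
  have c0 := sum_norm_sq_col_of_mem_unitaryGroup hc 0
  have c1 := sum_norm_sq_col_of_mem_unitaryGroup hc 1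
  simp only [Fin.sum_univ_two] at r0 c0 c1
  have h01 : ‖c 0 1‖ = ‖c 1 0‖ := by
    rw [← sq_eq_sq₀ (norm_nonneg _) (norm_nonneg _)]; linarith
  have h00 : ‖c 0 0‖ = ‖c 1 1‖ := by
    rw [← sq_eq_sq₀ (norm_nonneg _) (norm_nonneg _)]; linarith
  rw [norm_mul, norm_mul, h00, h01, mul_comm]

theorem norm_eps_mul_kronecker_row (M : Matrix (Fin 2 × Fin 2) (Fin 2 × Fin 2) ℂ)
    {a b : Matrix (Fin 2) (Fin 2) ℂ} (ha : a ∈ unitaryGroup (Fin 2) ℂ)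
    (hb : b ∈ unitaryGroup (Fin 2) ℂ) (p : Fin 2 × Fin 2) :
    ‖eps ((M * (a ⊗ₖ b)) p)‖ = ‖eps (M p)‖ := by
  have hdet (x : Matrix (Fin 2) (Fin 2) ℂ) (hx : x ∈ unitaryGroup (Fin 2) ℂ) : ‖x.det‖ = 1 :=
    CStarRing.norm_of_mem_unitary (det_of_mem_unitary hx)
  rw [mul_apply_eq_vecMul, eps_vecMul_kronecker, norm_mul, norm_mul, hdet a ha, hdet b hb,
    one_mul, one_mul]

theorem norm_eps_diagonal_mul_row (M : Matrix (Fin 2 × Fin 2) (Fin 2 × Fin 2) ℂ)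
    {δ : Fin 2 × Fin 2 → ℂ} {p : Fin 2 × Fin 2} (hδ : ‖δ p‖ = 1) :
    ‖eps ((diagonal δ * M) p)‖ = ‖eps (M p)‖ := by
  have hrow : (diagonal δ * M) p = δ p • M p := by
    ext q
    simp [diagonal_mul]
  rw [hrow, eps_smul, norm_mul, norm_pow, hδ, one_pow, one_mul]

theorem norm_eps_row_zero_eq_row_one {a b c : Matrix (Fin 2) (Fin 2) ℂ}
    (ha : a ∈ unitaryGroup (Fin 2) ℂ) (hb : b ∈ unitaryGroup (Fin 2) ℂ)
    (hc : c ∈ unitaryGroup (Fin 2) ℂ) (d : Matrix (Fin 2) (Fin 2) ℂ) {δ₁ : Fin 2 × Fin 2 → ℂ}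
    (hδ₁ : ∀ p, ‖δ₁ p‖ = 1) (δ₂ : Fin 2 × Fin 2 → ℂ) (j : Fin 2) :
    ‖eps ((diagonal δ₁ * ((c ⊗ₖ d) * diagonal δ₂) * (a ⊗ₖ b)) (0, j))‖ =
      ‖eps ((diagonal δ₁ * ((c ⊗ₖ d) * diagonal δ₂) * (a ⊗ₖ b)) (1, j))‖ := by
  simp only [norm_eps_mul_kronecker_row _ ha hb, norm_eps_diagonal_mul_row _ (hδ₁ _),
    eps_kronecker_mul_diagonal_row]
  rw [norm_mul, norm_mul (c 1 0 * _), norm_mul_row_zero_eq_row_one hc]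

theorem eq_star_mul_diagonal_inverse_mul_star_of_one_eq {n α : Type*} [Fintype n] [DecidableEq n]
    [CommRing α] [StarRing α] {L R G : Matrix n n α} (hL : L ∈ unitaryGroup n α)
    (hR : R ∈ unitaryGroup n α) {δ : n → α} (h : 1 = diagonal δ * L * G * R) :
    G = star L * diagonal (Ring.inverse δ) * star R := by
  have hLGR : L * G * R = diagonal (Ring.inverse δ) := by
    rw [← inv_diagonal, inv_eq_right_inv]
    rw [h]
    simp only [Matrix.mul_assoc]
  rw [← hLGR]
  simp only [← Matrix.mul_assoc, Unitary.star_mul_self_of_mem hL, one_mul]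
  simp only [Matrix.mul_assoc, Unitary.mul_star_self_of_mem hR, mul_one]

def givensRotation : Matrix (Fin 2 × Fin 2) (Fin 2 × Fin 2) ℂ :=
  of fun p => ![![e 0 0, (4 / 5 : ℂ) • e 0 1 - (3 / 5 : ℂ) • e 1 0],
    ![(3 / 5 : ℂ) • e 0 1 + (4 / 5 : ℂ) • e 1 0, e 1 1]] p.1 p.2

theorem givensRotation_mem_unitaryGroup : givensRotation ∈ unitaryGroup (Fin 2 × Fin 2) ℂ := by
  rw [mem_unitaryGroup_iff]
  ext ⟨i, j⟩ ⟨k, l⟩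
  fin_cases i <;> fin_cases j <;> fin_cases k <;> fin_cases l <;>
    simp [givensRotation, e, mul_apply, Fintype.sum_prod_type, Pi.single_apply, map_ofNat] <;>
    norm_num

theorem eps_givensRotation_row_zero : eps (givensRotation (0, 0)) = 0 := by
  simp [givensRotation, e, eps_eq_neg_two_mul_det, det_fin_two]

theorem eps_givensRotation_row_one : eps (givensRotation (1, 0)) = 24 / 25 := by
  simp [givensRotation, e, eps_eq_neg_two_mul_det, det_fin_two]
  norm_num

theorem single_gate_insufficient_diagonal_dont_care_general
    (G : Matrix (Fin 2 × Fin 2) (Fin 2 × Fin 2) ℂ) :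
    ∃ u ∈ Matrix.unitaryGroup (Fin 2 × Fin 2) ℂ,
      ∀ a ∈ Matrix.unitaryGroup (Fin 2) ℂ, ∀ b ∈ Matrix.unitaryGroup (Fin 2) ℂ,
        ∀ c ∈ Matrix.unitaryGroup (Fin 2) ℂ, ∀ d ∈ Matrix.unitaryGroup (Fin 2) ℂ,
          ∀ δ : Fin 2 × Fin 2 → ℂ, (∀ p, ‖δ p‖ = 1) →
            u ≠ Matrix.diagonal δ * (c ⊗ₖ d) * G * (a ⊗ₖ b) := by
  by_contra! h
  obtain ⟨a₀, ha₀, b₀, hb₀, c₀, hc₀, d₀, hd₀, δ₀, -, h₀⟩ := h 1 (one_mem _)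
  obtain ⟨a₁, ha₁, b₁, hb₁, c₁, hc₁, d₁, -, δ₁, hδ₁, h₁⟩ :=
    h givensRotation givensRotation_mem_unitaryGroup
  have hG := eq_star_mul_diagonal_inverse_mul_star_of_one_eq (kronecker_mem_unitary hc₀ hd₀)
    (kronecker_mem_unitary ha₀ hb₀) h₀
  have hu : givensRotation = diagonal δ₁ *
      ((c₁ * star c₀) ⊗ₖ (d₁ * star d₀) * diagonal (Ring.inverse δ₀)) *
      ((star a₀ * a₁) ⊗ₖ (star b₀ * b₁)) := by
    rw [h₁, hG]
    simp only [star_eq_conjTranspose, conjTranspose_kronecker, mul_kronecker_mul, Matrix.mul_assoc]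
  have key := norm_eps_row_zero_eq_row_one (mul_mem (Unitary.star_mem ha₀) ha₁)
    (mul_mem (Unitary.star_mem hb₀) hb₁) (mul_mem hc₁ (Unitary.star_mem hc₀)) (d₁ * star d₀) hδ₁
    (Ring.inverse δ₀) 0
  rw [← hu, eps_givensRotation_row_zero, eps_givensRotation_row_one] at key
  norm_num at key

theorem single_gate_insufficient_diagonal_dont_care
    (G : Matrix (Fin 2 × Fin 2) (Fin 2 × Fin 2) ℂ)
    (hG : G ∈ Matrix.unitaryGroup (Fin 2 × Fin 2) ℂ) :
    ∃ u ∈ Matrix.unitaryGroup (Fin 2 × Fin 2) ℂ,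
      ∀ a ∈ Matrix.unitaryGroup (Fin 2) ℂ, ∀ b ∈ Matrix.unitaryGroup (Fin 2) ℂ,
        ∀ c ∈ Matrix.unitaryGroup (Fin 2) ℂ, ∀ d ∈ Matrix.unitaryGroup (Fin 2) ℂ,
          ∀ δ : Fin 2 × Fin 2 → ℂ, (∀ p, ‖δ p‖ = 1) →
            u ≠ Matrix.diagonal δ * (c ⊗ₖ d) * G * (a ⊗ₖ b) :=
  single_gate_insufficient_diagonal_dont_care_general G
end
end
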